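/- arXiv:1910.01014 — 2 statements merged into one kernel-verified Lean document; each statement's English description precedes it below -/
import Mathlib

section
/- For a small category A, the codensity monad of the Yoneda embedding y : A → Set^{A^op}, i.e. the right Kan extension Ran_y y with its canonical monad structure, is isomorphic as a monad to the monad Spec ∘ O induced on Set^{A^op} by the Isbell adjunction O ⊣ Spec. -/
/-! Since `y♯` is fully faithful, the counit `y♯ ⋙ Spec ⟶ y` of `Spec = Ran_{y♯} y` is invertible,
so maps `P ⟶ y a` correspond to maps `P ⟶ Spec (y♯ a)`, hence by adjunction to maps `O P ⟶ y♯ a`.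
This identifies the comma categories `P ↓ y` and `O P ↓ y♯`, so `Spec (O P)`, the limit of `y`
over the latter, is also the limit of `y` over the former: `Spec ∘ O` is a pointwise `Ran_y y`.
Its counit is compatible with the unit and multiplication of the adjunction monad, and a monad
structure on `Ran_y y` with that compatibility is necessarily the codensity monad. -/

namespace CategoryTheory

open Functor Limits

noncomputable section

universe w w₂ v v₂ u u₂

namespace Codensity

variable {C : Type u} [Category.{v} C] {D : Type u₂} [Category.{v₂} D]
  (F : C ⥤ D) [F.HasRightKanExtension F]

abbrev T : D ⥤ D := F.rightKanExtension F

abbrev ε : F ⋙ T F ⟶ F := F.rightKanExtensionCounit F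

def unit : 𝟭 D ⟶ T F :=
  (T F).liftOfIsRightKanExtension (ε F) (𝟭 D) F.rightUnitor.hom

def mul : T F ⋙ T F ⟶ T F :=
  (T F).liftOfIsRightKanExtension (ε F) (T F ⋙ T F)
    ((Functor.associator F (T F) (T F)).inv ≫ whiskerRight (ε F) (T F) ≫ ε F)

lemma unit_fac (X : C) : (unit F).app (F.obj X) ≫ (ε F).app X = 𝟙 (F.obj X) := by
  simp [unit]

lemma mul_fac (X : C) :
    (mul F).app (F.obj X) ≫ (ε F).app X
      = (T F).map ((ε F).app X) ≫ (ε F).app X := by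
  have h := (T F).liftOfIsRightKanExtension_fac_app (ε F)
    (T F ⋙ T F) ((Functor.associator F (T F) (T F)).inv ≫ whiskerRight (ε F) (T F) ≫ ε F) X
  simp only [NatTrans.comp_app, Functor.associator_inv_app, whiskerRight_app,
    Functor.comp_obj, Category.id_comp] at h
  simpa [mul] using h

lemma left_unit' : whiskerLeft (T F) (unit F) ≫ mul F = (T F).rightUnitor.hom := by
  apply (T F).hom_ext_of_isRightKanExtension (ε F)
  ext X
  have h := (unit F).naturality ((ε F).app X)
  simp only [Functor.comp_obj, Functor.id_obj, Functor.id_map] at h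
  simp only [NatTrans.comp_app, whiskerLeft_app, Functor.rightUnitor_hom_app,
    Functor.comp_obj, Functor.id_obj, Category.id_comp, Category.assoc]
  rw [mul_fac, ← Category.assoc, ← h, Category.assoc, unit_fac]
  simp

lemma right_unit' : whiskerRight (unit F) (T F) ≫ mul F = (T F).leftUnitor.hom := by
  apply (T F).hom_ext_of_isRightKanExtension (ε F)
  ext X
  simp only [NatTrans.comp_app, whiskerRight_app, whiskerLeft_app, Functor.leftUnitor_hom_app,
    Functor.comp_obj, Functor.id_obj, Category.id_comp, Category.assoc]
  rw [mul_fac, ← Category.assoc, ← Functor.map_comp, unit_fac]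
  simp

lemma assoc' :
    whiskerRight (mul F) (T F) ≫ mul F
      = (Functor.associator _ _ _).hom ≫ whiskerLeft (T F) (mul F) ≫ mul F := by
  apply (T F).hom_ext_of_isRightKanExtension (ε F)
  ext X
  have h := (mul F).naturality ((ε F).app X)
  simp only [Functor.comp_obj, Functor.comp_map] at h
  simp only [NatTrans.comp_app, whiskerRight_app, whiskerLeft_app, Functor.associator_hom_app,
    Functor.comp_obj, Category.id_comp, Category.assoc]
  conv_lhs => rw [mul_fac, ← Category.assoc, ← Functor.map_comp, mul_fac, Functor.map_comp,
    Category.assoc]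
  conv_rhs => rw [mul_fac, ← Category.assoc, ← h, Category.assoc, mul_fac]

end Codensity

def codensityMonad {C : Type u} [Category.{v} C] {D : Type u₂} [Category.{v₂} D]
    (F : C ⥤ D) [F.HasRightKanExtension F] : Monad D where
  toFunctor := Codensity.T F
  η := Codensity.unit F
  μ := Codensity.mul F
  left_unit X := by
    simpa using NatTrans.congr_app (Codensity.left_unit' F) X
  right_unit X := by
    simpa using NatTrans.congr_app (Codensity.right_unit' F) X
  assoc X := by
    simpa using NatTrans.congr_app (Codensity.assoc' F) X

end

end CategoryTheory

universe u'

open CategoryTheory Functor Limits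

noncomputable section

/-- The copresheaf embedding `y♯ : A ⥤ (Set^A)ᵒᵖ`, `a ↦ A(a, -)`. -/
def ysharp (A : Type u') [SmallCategory A] : A ⥤ (A ⥤ Type u')ᵒᵖ := coyoneda.rightOp

namespace CategoryTheory

section CodensityMonadUniqueness

variable {C D : Type*} [Category* C] [Category* D] {F : C ⥤ D} [F.HasRightKanExtension F]
  (M : Monad D) (ε : F ⋙ (M : D ⥤ D) ⟶ F) [(M : D ⥤ D).IsRightKanExtension ε]

def codensityMonadLift : Codensity.T F ⟶ (M : D ⥤ D) :=
  (M : D ⥤ D).liftOfIsRightKanExtension ε _ (Codensity.ε F)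

lemma codensityMonadLift_app_comp (c : C) :
    (codensityMonadLift M ε).app (F.obj c) ≫ ε.app c = (Codensity.ε F).app c :=
  liftOfIsRightKanExtension_fac_app _ ε _ _ c

instance : IsIso (codensityMonadLift M ε) :=
  (isRightKanExtension_iff_isIso _ ε (Codensity.ε F)
    (liftOfIsRightKanExtension_fac _ ε _ _)).mp inferInstance

lemma unit_comp_codensityMonadLift (η_ε : ∀ c, M.η.app (F.obj c) ≫ ε.app c = 𝟙 (F.obj c)) :
    Codensity.unit F ≫ codensityMonadLift M ε = M.η := by
  apply (M : D ⥤ D).hom_ext_of_isRightKanExtension ε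
  ext c
  simp [codensityMonadLift_app_comp, Codensity.unit_fac, η_ε]

lemma mul_comp_codensityMonadLift
    (μ_ε : ∀ c, M.μ.app (F.obj c) ≫ ε.app c = M.map (ε.app c) ≫ ε.app c) :
    Codensity.mul F ≫ codensityMonadLift M ε =
      whiskerRight (codensityMonadLift M ε) (Codensity.T F) ≫
        whiskerLeft (M : D ⥤ D) (codensityMonadLift M ε) ≫ M.μ := by
  apply (M : D ⥤ D).hom_ext_of_isRightKanExtension ε
  ext c
  simp only [NatTrans.comp_app, whiskerLeft_app, whiskerRight_app, Category.assoc]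
  rw [μ_ε, ← (codensityMonadLift M ε).naturality_assoc, codensityMonadLift_app_comp,
    ← (Codensity.T F).map_comp_assoc, codensityMonadLift_app_comp]
  exact Codensity.mul_fac F c

def codensityMonadIsoOfIsRightKanExtension
    (η_ε : ∀ c, M.η.app (F.obj c) ≫ ε.app c = 𝟙 (F.obj c))
    (μ_ε : ∀ c, M.μ.app (F.obj c) ≫ ε.app c = M.map (ε.app c) ≫ ε.app c) :
    codensityMonad F ≅ M :=
  MonadIso.mk (asIso (codensityMonadLift M ε) : Codensity.T F ≅ M)
    (fun X => congr_app (unit_comp_codensityMonadLift M ε η_ε) X)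
    (fun X => (congr_app (mul_comp_codensityMonadLift M ε μ_ε) X).trans
      (Category.assoc _ _ _).symm)

end CodensityMonadUniqueness

end CategoryTheory

namespace CategoryTheory.Adjunction

variable {C D E : Type*} [Category* C] [Category* D] [Category* E]
  {L : D ⥤ E} {R : E ⥤ D} (adj : L ⊣ R)

def structuredArrowEquivalence (G : C ⥤ E) (P : D) :
    StructuredArrow P (G ⋙ R) ≌ StructuredArrow (L.obj P) G where
  functor :=
    { obj f := StructuredArrow.mk ((adj.homEquiv _ _).symm f.hom)
      map m := StructuredArrow.homMk m.right
        ((adj.homEquiv_naturality_right_symm _ _).symm.trans (congrArg _ (StructuredArrow.w m))) }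
  inverse :=
    { obj f := StructuredArrow.mk (adj.homEquiv _ _ f.hom)
      map m := StructuredArrow.homMk m.right
        ((adj.homEquiv_naturality_right _ _).symm.trans (congrArg _ (StructuredArrow.w m))) }
  unitIso := NatIso.ofComponents (fun f => StructuredArrow.isoMk (Iso.refl _))
  counitIso := NatIso.ofComponents (fun f => StructuredArrow.isoMk (Iso.refl _))

variable {F : C ⥤ D} {G : C ⥤ E} (σ : G ⋙ R ≅ F)

def codensityCounit : F ⋙ L ⋙ R ⟶ F :=
  whiskerRight σ.inv (L ⋙ R) ≫ whiskerLeft G (whiskerRight adj.counit R) ≫ σ.hom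

lemma codensityCounit_app (c : C) :
    (adj.codensityCounit σ).app c =
      R.map ((adj.homEquiv _ _).symm (σ.inv.app c)) ≫ σ.hom.app c := by
  simp [codensityCounit, homEquiv_counit]

lemma unit_app_comp_codensityCounit_app (c : C) :
    adj.unit.app (F.obj c) ≫ (adj.codensityCounit σ).app c = 𝟙 (F.obj c) := by
  simp [codensityCounit]

lemma toMonad_μ_app_comp_codensityCounit_app (c : C) :
    adj.toMonad.μ.app (F.obj c) ≫ (adj.codensityCounit σ).app c =
      adj.toMonad.map ((adj.codensityCounit σ).app c) ≫ (adj.codensityCounit σ).app c := by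
  set h := (adj.homEquiv _ _).symm (σ.inv.app c)
  have h_eq : h = L.map (σ.inv.app c) ≫ adj.counit.app (G.obj c) := adj.homEquiv_counit _ _ _
  change R.map (adj.counit.app _) ≫ (adj.codensityCounit σ).app c =
    R.map (L.map ((adj.codensityCounit σ).app c)) ≫ (adj.codensityCounit σ).app c
  rw [codensityCounit_app, ← R.map_comp_assoc, ← R.map_comp_assoc]
  congr 2
  calc adj.counit.app _ ≫ h = L.map (R.map h) ≫ adj.counit.app (G.obj c) :=
        (adj.counit_naturality h).symm
    _ = L.map (R.map h ≫ σ.hom.app c) ≫ h := by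
        rw [h_eq, L.map_comp, Category.assoc, ← L.map_comp_assoc (σ.hom.app c),
          Iso.hom_inv_id_app, L.map_id, Category.id_comp]

def isPointwiseRightKanExtensionCodensityCounit
    (hR : (RightExtension.mk R σ.hom).IsPointwiseRightKanExtension) :
    (RightExtension.mk (L ⋙ R) (adj.codensityCounit σ)).IsPointwiseRightKanExtension := fun P =>
  ((hR (L.obj P)).whiskerEquivalence
      ((StructuredArrow.mapNatIso σ).symm.trans (adj.structuredArrowEquivalence G P))).ofIsoLimit
    (Cone.ext (Iso.refl _) fun f => by
      change R.map ((adj.homEquiv _ _).symm (f.hom ≫ σ.inv.app f.right)) ≫ σ.hom.app f.right =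
        𝟙 _ ≫ R.map (L.map f.hom) ≫ (adj.codensityCounit σ).app f.right
      rw [homEquiv_naturality_left_symm, codensityCounit_app, R.map_comp_assoc, Category.id_comp])

def codensityMonadIso [F.HasRightKanExtension F]
    (hR : (RightExtension.mk R σ.hom).IsPointwiseRightKanExtension) :
    codensityMonad F ≅ adj.toMonad :=
  have : (adj.toMonad : D ⥤ D).IsRightKanExtension (adj.codensityCounit σ) :=
    (adj.isPointwiseRightKanExtensionCodensityCounit σ hR).isRightKanExtension
  codensityMonadIsoOfIsRightKanExtension adj.toMonad (adj.codensityCounit σ)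
    (adj.unit_app_comp_codensityCounit_app σ) (adj.toMonad_μ_app_comp_codensityCounit_app σ)

end CategoryTheory.Adjunction

/-- The codensity monad of the Yoneda embedding is isomorphic to the monad induced by the
Isbell adjunction `O = Lan_y y♯ ⊣ Spec = Ran_{y♯} y`. -/
theorem codensityMonad_yoneda_iso_isbell_monad (A : Type u') [SmallCategory A]
    (adj : yoneda.leftKanExtension (ysharp A) ⊣ (ysharp A).rightKanExtension yoneda) :
    Nonempty ((codensityMonad (yoneda (C := A))) ≅ adj.toMonad) := by
  have : (ysharp A).Full := inferInstanceAs (coyoneda.rightOp).Full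
  have : (ysharp A).Faithful := inferInstanceAs (coyoneda.rightOp).Faithful
  have hSpec := isPointwiseRightKanExtensionOfIsRightKanExtension _
    ((ysharp A).rightKanExtensionCounit yoneda)
  have : IsIso ((ysharp A).rightKanExtensionCounit yoneda) := hSpec.isIso_hom
  exact ⟨adj.codensityMonadIso (asIso ((ysharp A).rightKanExtensionCounit yoneda)) hSpec⟩

end
end

section
/- Let A be a small category with finite limits and finite colimits, let i : A → Ind A be the canonical inclusion with codensity monad T_i = Ran_i i, and let 𝒪 : Ind A ⇄ Pro A : 𝒮 be the restricted Isbell adjunction. Then the monad on Ind A induced by 𝒪 ⊣ 𝒮 is the codensity monad T_i, and 𝒮 lifts along the forgetful functor U_{T_i} : Alg(T_i) → Ind A to a functor C : Pro A → Alg(T_i) with U_{T_i} ∘ C ≅ 𝒮. -/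
universe u'

open CategoryTheory Functor Limits

noncomputable section

variable (A : Type u') [SmallCategory A]

/-- The Ind-completion of `A` : `Lex(Aᵒᵖ, Set) ⊆ Set^{Aᵒᵖ}`. -/
abbrev IndCat := ObjectProperty.FullSubcategory (fun P : Aᵒᵖ ⥤ Type u' => PreservesFiniteLimits P)

/-- The Pro-completion of `A` : `(Lex(A, Set))ᵒᵖ ⊆ (Set^A)ᵒᵖ`. -/
abbrev ProCat := (ObjectProperty.FullSubcategory (fun Q : A ⥤ Type u' => PreservesFiniteLimits Q))ᵒᵖ

/-- Inclusion `Ind A ⊆ Set^{Aᵒᵖ}`. -/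
abbrev iotaInd : IndCat A ⥤ (Aᵒᵖ ⥤ Type u') := ObjectProperty.ι _

/-- Inclusion `Pro A ⊆ (Set^A)ᵒᵖ`. -/
abbrev iotaPro : ProCat A ⥤ (A ⥤ Type u')ᵒᵖ := (ObjectProperty.ι _).op

/-- The canonical inclusion `i : A ⥤ Ind A`, induced by the Yoneda embedding. -/
def indInc : A ⥤ IndCat A :=
  ObjectProperty.lift _ yoneda (fun _ => inferInstance)

/-! The monad `𝒮𝒪` of the restricted Isbell adjunction is `𝒮𝒪 X (b) = Nat(Ind A(X, i -), A(b, -))`.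
For any `K : A ⥤ E`, the functor `X ↦ (b ↦ Nat(E(X, K -), A(b, -)))` is the right Kan extension of
Yoneda along `K`, with counit "evaluate at the identity": by naturality, a family
`φ_c : E(K a, K c) → A(b, c)` is determined by `φ_a (𝟙)`. For `K = y♯` this identifies `Spec` with
`Ran_{y♯} y`; for `K = i`, read inside the full subcategory `Ind A`, it exhibits `𝒮𝒪` as `Ran_i i`
with a counit that is invertible (`i` is fully faithful) and inverse to the unit of `𝒪 ⊣ 𝒮` on
representables. A monad structure on `Ran_i i` with such a counit is necessarily the codensity
monad, and `𝒮` lifts to algebras through the Eilenberg–Moore comparison functor. -/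

open Opposite

namespace CategoryTheory

namespace Monad

variable {D : Type*} [Category D] (M : Monad D)

lemma μ_app_eq_map_of_η_app_comp {X : D} (f : M.obj X ⟶ X) [IsIso f]
    (hf : M.η.app X ≫ f = 𝟙 X) : M.μ.app X = M.map f := by
  have h := M.right_unit X
  rw [IsIso.eq_inv_of_inv_hom_id hf, Functor.map_inv, IsIso.inv_comp_eq, Category.comp_id] at h
  exact h

variable {C : Type*} [Category C] {F : C ⥤ D} [F.HasRightKanExtension F]

def isoCodensityMonad (ε : F ⋙ (M : D ⥤ D) ⟶ F) [(M : D ⥤ D).IsRightKanExtension ε] [IsIso ε]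
    (hη : ∀ X, M.η.app (F.obj X) ≫ ε.app X = 𝟙 (F.obj X)) :
    M ≅ codensityMonad F := by
  let Φ := (M : D ⥤ D).rightKanExtensionUnique ε (Codensity.T F) (Codensity.ε F)
  have hΦ (X : C) : Φ.hom.app (F.obj X) ≫ (Codensity.ε F).app X = ε.app X := by
    simp [Φ, rightKanExtensionUnique, rightKanExtensionUniqueOfIso]
  have Φ_η : M.η ≫ Φ.hom = Codensity.unit F := by
    refine (Codensity.T F).hom_ext_of_isRightKanExtension (Codensity.ε F) _ _ ?_
    ext X
    simp [hΦ, hη, Codensity.unit_fac]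
  have Φ_μ : M.μ ≫ Φ.hom =
      whiskerRight Φ.hom M.toFunctor ≫ whiskerLeft (Codensity.T F) Φ.hom ≫ Codensity.mul F := by
    refine (Codensity.T F).hom_ext_of_isRightKanExtension (Codensity.ε F) _ _ ?_
    ext X
    simp only [NatTrans.comp_app, whiskerLeft_app, whiskerRight_app, Category.assoc,
      Codensity.mul_fac]
    rw [← Φ.hom.naturality_assoc, hΦ, ← Functor.map_comp_assoc, hΦ,
      M.μ_app_eq_map_of_η_app_comp (ε.app X) (hη X)]
  exact MonadIso.mk Φ (fun X => congr_app Φ_η X) (fun X => by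
    rw [Category.assoc]
    exact congr_app Φ_μ X)

end Monad

def Adjunction.toMonadIsoCodensityMonad {C : Type*} [Category C] {D : Type*} [Category D]
    {E : Type*} [Category E] {F : C ⥤ D} [F.HasRightKanExtension F] {L : D ⥤ E} {R : E ⥤ D}
    (adj : L ⊣ R) (ε : F ⋙ L ⋙ R ⟶ F) [(L ⋙ R).IsRightKanExtension ε] [IsIso ε]
    (hη : ∀ X, adj.unit.app (F.obj X) ≫ ε.app X = 𝟙 (F.obj X)) :
    adj.toMonad ≅ codensityMonad F :=
  -- `adj.toMonad` unfolds to `L ⋙ R` only past reducible transparency.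
  haveI : (adj.toMonad : D ⥤ D).IsRightKanExtension ε := ‹_›
  haveI : @IsIso (C ⥤ D) _ (F ⋙ (adj.toMonad : D ⥤ D)) F ε := ‹_›
  adj.toMonad.isoCodensityMonad ε hη

lemma Functor.isRightKanExtension_of_comp_fullyFaithful {A : Type*} [Category A] {E : Type*}
    [Category E] {D : Type*} [Category D] {D' : Type*} [Category D'] {K : A ⥤ E} {G : A ⥤ D}
    {ι : D ⥤ D'} [ι.Full] [ι.Faithful] {R : E ⥤ D} (α : K ⋙ R ⟶ G)
    [(R ⋙ ι).IsRightKanExtension ((associator K R ι).inv ≫ whiskerRight α ι)] :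
    R.IsRightKanExtension α := by
  let hι := (FullyFaithful.ofFullyFaithful ι).whiskeringRight E
  let β := (associator K R ι).inv ≫ whiskerRight α ι
  let lift (S : RightExtension K G) : S.left ⟶ R :=
    hι.preimage ((R ⋙ ι).liftOfIsRightKanExtension β (S.left ⋙ ι)
      ((associator K S.left ι).inv ≫ whiskerRight S.hom ι))
  refine ⟨⟨IsTerminal.ofUniqueHom (fun S => CostructuredArrow.homMk (lift S) ?_) ?_⟩⟩
  · ext a
    change (lift S).app (K.obj a) ≫ α.app a = S.hom.app a
    apply ι.map_injective
    have h := (R ⋙ ι).liftOfIsRightKanExtension_fac_app β (S.left ⋙ ι)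
      ((associator K S.left ι).inv ≫ whiskerRight S.hom ι) a
    simpa [lift, hι, β] using h
  · intro S m
    apply CostructuredArrow.hom_ext
    -- `m.left` lands in `(RightExtension.mk R α).left`, which rewriting does not identify with `R`.
    have h : whiskerLeft K (m.left : S.left ⟶ R) ≫ α = S.hom := CostructuredArrow.w m
    change m.left = lift S
    generalize m.left = f at h ⊢
    apply hι.map_injective
    refine Eq.trans ?_ (hι.map_preimage _).symm
    apply (R ⋙ ι).hom_ext_of_isRightKanExtension β
    refine Eq.trans ?_ (liftOfIsRightKanExtension_fac _ _ _ _).symm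
    rw [← h]
    ext a
    change ι.map (f.app (K.obj a)) ≫ 𝟙 _ ≫ ι.map (α.app a) =
      𝟙 _ ≫ ι.map (f.app (K.obj a) ≫ α.app a)
    rw [Category.id_comp, Category.id_comp]
    exact (ι.map_comp _ _).symm

section RestrictedCoyoneda

variable {C : Type*} [Category C] {E : Type*} [Category E]

def restrictedCoyoneda (K : C ⥤ E) : Eᵒᵖ ⥤ C ⥤ Type _ :=
  coyoneda ⋙ (whiskeringLeft C E _).obj K

instance (K : C ⥤ E) [PreservesFiniteLimits K] (X : Eᵒᵖ) :
    PreservesFiniteLimits ((restrictedCoyoneda K).obj X) :=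
  comp_preservesFiniteLimits K (coyoneda.obj X)

def Functor.FullyFaithful.compRestrictedCoyonedaRightOpIso {K : C ⥤ E} (hK : K.FullyFaithful) :
    K ⋙ (restrictedCoyoneda K).rightOp ≅ coyoneda.rightOp :=
  NatIso.ofComponents
    (fun a => Iso.op (NatIso.ofComponents (fun c => hK.homEquiv.toIso)
      (fun f => by ext g; simp [restrictedCoyoneda])))
    (fun {a a'} f => by
      apply Quiver.Hom.unop_inj
      ext c (g : a' ⟶ c)
      exact (K.map_comp f g).symm)

def Functor.FullyFaithful.restrictedCoyonedaCompIso {D : Type*} [Category D] {ι : D ⥤ E}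
    (hι : ι.FullyFaithful) (G : C ⥤ D) :
    ι.op ⋙ restrictedCoyoneda (G ⋙ ι) ≅ restrictedCoyoneda G :=
  NatIso.ofComponents
    (fun X => NatIso.ofComponents (fun c => hι.homEquiv.symm.toIso)
      (fun {c c'} f => by
        ext (g : ι.obj X.unop ⟶ ι.obj (G.obj c))
        apply hι.map_injective
        simp [restrictedCoyoneda]))
    (fun {X X'} f => by
      ext c (g : ι.obj X.unop ⟶ ι.obj (G.obj c))
      change hι.preimage (ι.map f.unop ≫ g) = f.unop ≫ hι.preimage g
      apply hι.map_injective
      simp)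

end RestrictedCoyoneda

end CategoryTheory

section IsbellAdjunction

def isbellO : (Aᵒᵖ ⥤ Type u') ⥤ (A ⥤ Type u')ᵒᵖ := (restrictedCoyoneda yoneda).rightOp

def isbellSpec : (A ⥤ Type u')ᵒᵖ ⥤ Aᵒᵖ ⥤ Type u' := restrictedCoyoneda coyoneda

variable {A} in
lemma isbellSpec_obj_obj_ext {E : (A ⥤ Type u')ᵒᵖ} {b : Aᵒᵖ}
    {φ ψ : ((isbellSpec A).obj E).obj b} (h : ∀ c e, φ.app c e = ψ.app c e) : φ = ψ :=
  NatTrans.ext (funext fun c => ConcreteCategory.hom_ext _ _ (h c))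

def isbellHomEquiv (P : Aᵒᵖ ⥤ Type u') (E : (A ⥤ Type u')ᵒᵖ) :
    ((isbellO A).obj P ⟶ E) ≃ (P ⟶ (isbellSpec A).obj E) where
  toFun f :=
    { app b := ↾fun x =>
        { app a := ↾fun e => (f.unop.app a e).app b x
          naturality a a' h := by
            ext e
            exact ConcreteCategory.congr_hom
              (congr_app (ConcreteCategory.congr_hom (f.unop.naturality h) e) b) x }
      naturality b b' k := by
        ext x : 3
        apply NatTrans.ext
        ext a e
        exact ConcreteCategory.congr_hom ((f.unop.app a e).naturality k) x }
  invFun g := Quiver.Hom.op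
    { app a := ↾fun e =>
        { app b := ↾fun x => (g.app b x).app a e
          naturality b b' k := by
            ext x
            exact ConcreteCategory.congr_hom
              (congr_app (ConcreteCategory.congr_hom (g.naturality k) x) a) e }
      naturality a a' h := by
        ext e : 3
        apply NatTrans.ext
        ext b x
        exact ConcreteCategory.congr_hom ((g.app b x).naturality h) e }
  left_inv f := rfl
  right_inv g := rfl

def isbellAdjunction : isbellO A ⊣ isbellSpec A :=
  Adjunction.mkOfHomEquiv
    { homEquiv := isbellHomEquiv A
      homEquiv_naturality_left_symm _ _ := rfl
      homEquiv_naturality_right _ _ := rfl }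

end IsbellAdjunction

section SpecRestrictedCoyoneda

variable {A} {E : Type*} [Category.{u'} E] (K : A ⥤ E)

/-- `X ↦ (b ↦ Nat(E(X, K -), A(b, -)))`, the pointwise formula for `Ran_K yoneda`. -/
def specRestrictedCoyoneda : E ⥤ Aᵒᵖ ⥤ Type u' := (restrictedCoyoneda K).rightOp ⋙ isbellSpec A

def specRestrictedCoyonedaCounit : K ⋙ specRestrictedCoyoneda K ⟶ yoneda where
  app a :=
    { app b := ↾fun φ => φ.app a (𝟙 (K.obj a))
      naturality b b' k := rfl }
  naturality a a' f := by
    ext b φ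
    have h : φ.app a' (𝟙 _ ≫ K.map f) = φ.app a (𝟙 _) ≫ f := NatTrans.naturality_apply φ f _
    change φ.app a' (K.map f ≫ 𝟙 _) = φ.app a (𝟙 _) ≫ f
    rwa [Category.id_comp, ← Category.comp_id (K.map f)] at h

section Lift

variable {K} {H : E ⥤ Aᵒᵖ ⥤ Type u'} (γ : K ⋙ H ⟶ yoneda)

def specRestrictedCoyonedaLift : H ⟶ specRestrictedCoyoneda K where
  app X :=
    { app b := ↾fun ξ =>
        { app c := ↾fun q => (γ.app c).app b ((H.map q).app b ξ)
          naturality c c' f := by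
            ext (q : X ⟶ K.obj c)
            change (γ.app c').app b ((H.map (q ≫ K.map f)).app b ξ) =
              (γ.app c).app b ((H.map q).app b ξ) ≫ f
            rw [H.map_comp]
            simpa using ConcreteCategory.congr_hom (congr_app (γ.naturality f) b)
              ((H.map q).app b ξ) }
      naturality b b' k := by
        ext ξ
        refine isbellSpec_obj_obj_ext fun c (q : X ⟶ K.obj c) => ?_
        change (γ.app c).app b' ((H.map q).app b' ((H.obj X).map k ξ)) =
          k.unop ≫ (γ.app c).app b ((H.map q).app b ξ)
        simp }
  naturality X X' g := by
    ext b ξ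
    refine isbellSpec_obj_obj_ext fun c (q : X' ⟶ K.obj c) => ?_
    change (γ.app c).app b ((H.map q).app b ((H.map g).app b ξ)) =
      (γ.app c).app b ((H.map (g ≫ q)).app b ξ)
    simp

lemma specRestrictedCoyonedaLift_fac :
    whiskerLeft K (specRestrictedCoyonedaLift γ) ≫ specRestrictedCoyonedaCounit K = γ := by
  ext a b ξ
  change (γ.app a).app b ((H.map (𝟙 (K.obj a))).app b ξ) = (γ.app a).app b ξ
  simp

lemma eq_specRestrictedCoyonedaLift (m : H ⟶ specRestrictedCoyoneda K)
    (hm : whiskerLeft K m ≫ specRestrictedCoyonedaCounit K = γ) :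
    m = specRestrictedCoyonedaLift γ := by
  ext X b ξ
  refine isbellSpec_obj_obj_ext fun c (q : X ⟶ K.obj c) => ?_
  have hnat : ((m.app (K.obj c)).app b ((H.map q).app b ξ)).app c (𝟙 _) =
      ((m.app X).app b ξ).app c (q ≫ 𝟙 _) :=
    congr_arg (fun φ => φ.app c (𝟙 (K.obj c)))
      (ConcreteCategory.congr_hom (congr_app (m.naturality q) b) ξ)
  change ((m.app X).app b ξ).app c q = (γ.app c).app b ((H.map q).app b ξ)
  rw [Category.comp_id] at hnat
  rw [← hm]
  exact hnat.symm

end Lift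

instance : (specRestrictedCoyoneda K).IsRightKanExtension (specRestrictedCoyonedaCounit K) :=
  ⟨⟨IsTerminal.ofUniqueHom
      (fun G => CostructuredArrow.homMk (specRestrictedCoyonedaLift G.hom)
        (specRestrictedCoyonedaLift_fac G.hom))
      (fun G m => CostructuredArrow.hom_ext _ _
        (eq_specRestrictedCoyonedaLift G.hom m.left (CostructuredArrow.w m)))⟩⟩

lemma specRestrictedCoyoneda_app_eq [K.Full] {a c : A} {b : Aᵒᵖ}
    (φ : ((specRestrictedCoyoneda K).obj (K.obj a)).obj b) (q : K.obj a ⟶ K.obj c) :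
    φ.app c q = φ.app a (𝟙 _) ≫ K.preimage q := by
  have h : φ.app c (𝟙 _ ≫ K.map (K.preimage q)) = φ.app a (𝟙 _) ≫ K.preimage q :=
    NatTrans.naturality_apply φ (K.preimage q) _
  rwa [Category.id_comp, K.map_preimage] at h

instance [K.Full] [K.Faithful] (a : A) (b : Aᵒᵖ) :
    IsIso (((specRestrictedCoyonedaCounit K).app a).app b) := by
  rw [isIso_iff_bijective]
  refine ⟨fun φ ψ h => ?_, fun x => ⟨?_, ?_⟩⟩
  · refine isbellSpec_obj_obj_ext fun c (q : K.obj a ⟶ K.obj c) => ?_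
    change φ.app a (𝟙 _) = ψ.app a (𝟙 _) at h
    rw [specRestrictedCoyoneda_app_eq K φ q, specRestrictedCoyoneda_app_eq K ψ q, h]
  · exact { app c := ↾fun q => x ≫ K.preimage q
            naturality c c' f := by
              ext (q : K.obj a ⟶ K.obj c)
              change x ≫ K.preimage (q ≫ K.map f) = (x ≫ K.preimage q) ≫ f
              simp }
  · change x ≫ K.preimage (𝟙 _) = x
    simp

instance [K.Full] [K.Faithful] : IsIso (specRestrictedCoyonedaCounit K) := by
  have (a : A) : IsIso ((specRestrictedCoyonedaCounit K).app a) := NatIso.isIso_of_isIso_app _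
  exact NatIso.isIso_of_isIso_app _

end SpecRestrictedCoyoneda

section IsbellKanExtensions

def restrictedCoyonedaYsharpIso : (restrictedCoyoneda (ysharp A)).rightOp ≅ 𝟭 _ :=
  NatIso.ofComponents
    (fun E => Iso.op (NatIso.ofComponents
      (fun a => ((opEquiv _ _).trans coyonedaEquiv).symm.toIso)
      (fun f => by
        ext x
        apply Quiver.Hom.unop_inj
        simp [restrictedCoyoneda, ysharp, opEquiv, coyonedaEquiv_symm_map])))
    (fun ψ => by
      apply Quiver.Hom.unop_inj
      ext a x
      simp only [restrictedCoyoneda, ysharp, opEquiv]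
      apply Quiver.Hom.unop_inj
      apply coyonedaEquiv.injective
      simp [coyonedaEquiv_comp])

def isbellSpecIsoRan : isbellSpec A ≅ (ysharp A).rightKanExtension yoneda :=
  isoWhiskerRight (restrictedCoyonedaYsharpIso A).symm (isbellSpec A) ≪≫
    rightKanExtensionUnique _ (specRestrictedCoyonedaCounit (ysharp A)) _
      ((ysharp A).rightKanExtensionCounit yoneda)

instance : PreservesColimitsOfSize.{u', u'} (isbellO A) :=
  (isbellAdjunction A).leftAdjoint_preservesColimits

def ysharpIsoYonedaCompIsbellO : ysharp A ≅ yoneda ⋙ isbellO A :=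
  Yoneda.fullyFaithful.compRestrictedCoyonedaRightOpIso.symm

instance : (isbellO A).IsLeftKanExtension (ysharpIsoYonedaCompIsbellO A).hom := by
  let e : uliftYoneda.{u'} ⋙ 𝟭 _ ≅ yoneda (C := A) := uliftYonedaIsoYoneda.{u'}
  rw [isLeftKanExtension_iff_postcomp₁ (𝟭 _) e]
  exact Presheaf.isLeftKanExtension_of_preservesColimits.{0} (𝟭 _ ⋙ isbellO A)
    (ysharpIsoYonedaCompIsbellO A ≪≫ isoWhiskerRight e.symm (isbellO A) ≪≫ associator _ _ _)

def isbellOIsoLan : isbellO A ≅ yoneda.leftKanExtension (ysharp A) :=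
  leftKanExtensionUnique _ (ysharpIsoYonedaCompIsbellO A).hom _ (yoneda.leftKanExtensionUnit _)

end IsbellKanExtensions

section RestrictedIsbellAdjunction

def restrictedCoyonedaIndIncIso :
    (iotaInd A).op ⋙ restrictedCoyoneda yoneda ≅ restrictedCoyoneda (indInc A) :=
  (ObjectProperty.fullyFaithfulι _).restrictedCoyonedaCompIso (indInc A)

instance (X : (IndCat A)ᵒᵖ) : PreservesFiniteLimits ((restrictedCoyoneda (indInc A)).obj X) :=
  have : PreservesFiniteLimits (((iotaInd A).op ⋙ restrictedCoyoneda yoneda).obj X) :=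
    inferInstanceAs (PreservesFiniteLimits ((restrictedCoyoneda yoneda).obj _))
  preservesFiniteLimits_of_natIso ((restrictedCoyonedaIndIncIso A).app X)

def restrictedIsbellO : IndCat A ⥤ ProCat A :=
  (ObjectProperty.lift (fun Q : A ⥤ Type u' => PreservesFiniteLimits Q)
    (restrictedCoyoneda (indInc A)) fun _ => inferInstance).rightOp

def restrictedIsbellSpec : ProCat A ⥤ IndCat A :=
  ObjectProperty.lift (fun P : Aᵒᵖ ⥤ Type u' => PreservesFiniteLimits P)
    (iotaPro A ⋙ isbellSpec A) fun _ =>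
      inferInstanceAs (PreservesFiniteLimits ((restrictedCoyoneda coyoneda).obj _))

def iotaIndCompIsbellOIso : iotaInd A ⋙ isbellO A ≅ restrictedIsbellO A ⋙ iotaPro A :=
  NatIso.ofComponents (fun X => ((restrictedCoyonedaIndIncIso A).app (op X)).op.symm)
    (fun f => Quiver.Hom.unop_inj ((restrictedCoyonedaIndIncIso A).inv.naturality f.op))

def iotaProCompIsbellSpecIso : iotaPro A ⋙ isbellSpec A ≅ restrictedIsbellSpec A ⋙ iotaInd A :=
  Iso.refl _

def restrictedIsbellAdjunction : restrictedIsbellO A ⊣ restrictedIsbellSpec A :=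
  (isbellAdjunction A).restrictFullyFaithful (ObjectProperty.fullyFaithfulι _)
    (ObjectProperty.fullyFaithfulι _).op (iotaIndCompIsbellOIso A) (iotaProCompIsbellSpecIso A)

end RestrictedIsbellAdjunction

section Codensity

instance : (indInc A).Full := by unfold indInc; infer_instance

instance : (indInc A).Faithful := by unfold indInc; infer_instance

def restrictedIsbellCounit : indInc A ⋙ restrictedIsbellO A ⋙ restrictedIsbellSpec A ⟶ indInc A :=
  ((ObjectProperty.fullyFaithfulι _).whiskeringRight A).preimage
    (specRestrictedCoyonedaCounit (indInc A))

lemma whiskerRight_restrictedIsbellCounit :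
    (associator (indInc A) (restrictedIsbellO A ⋙ restrictedIsbellSpec A) (iotaInd A)).inv ≫
      whiskerRight (restrictedIsbellCounit A) (iotaInd A) =
      specRestrictedCoyonedaCounit (indInc A) := by
  ext a : 2
  exact Category.id_comp _

instance : (restrictedIsbellO A ⋙ restrictedIsbellSpec A).IsRightKanExtension
    (restrictedIsbellCounit A) := by
  have : ((restrictedIsbellO A ⋙ restrictedIsbellSpec A) ⋙ iotaInd A).IsRightKanExtension
      ((associator (indInc A) (restrictedIsbellO A ⋙ restrictedIsbellSpec A) (iotaInd A)).inv ≫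
        whiskerRight (restrictedIsbellCounit A) (iotaInd A)) := by
    rw [whiskerRight_restrictedIsbellCounit]
    exact inferInstanceAs ((specRestrictedCoyoneda (indInc A)).IsRightKanExtension
      (specRestrictedCoyonedaCounit (indInc A)))
  exact isRightKanExtension_of_comp_fullyFaithful (ι := iotaInd A) _

instance : IsIso (restrictedIsbellCounit A) := by
  have (a : A) : IsIso ((iotaInd A).map ((restrictedIsbellCounit A).app a)) :=
    inferInstanceAs (IsIso ((specRestrictedCoyonedaCounit (indInc A)).app a))
  have (a : A) : IsIso ((restrictedIsbellCounit A).app a) := isIso_of_fully_faithful (iotaInd A) _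
  exact NatIso.isIso_of_isIso_app _

lemma restrictedIsbellAdjunction_unit_app_comp_counit_app (a : A) :
    (restrictedIsbellAdjunction A).unit.app ((indInc A).obj a) ≫
      (restrictedIsbellCounit A).app a = 𝟙 _ := by
  apply (iotaInd A).map_injective
  rw [Functor.map_comp, restrictedIsbellAdjunction,
    Adjunction.map_restrictFullyFaithful_unit_app]
  ext b x
  rfl

variable [(indInc A).HasRightKanExtension (indInc A)]

def restrictedIsbellMonadIso :
    (restrictedIsbellAdjunction A).toMonad ≅ codensityMonad (indInc A) :=
  (restrictedIsbellAdjunction A).toMonadIsoCodensityMonad (restrictedIsbellCounit A)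
    (restrictedIsbellAdjunction_unit_app_comp_counit_app A)

def restrictedIsbellSpecLift : ProCat A ⥤ (codensityMonad (indInc A)).Algebra :=
  Monad.comparison (restrictedIsbellAdjunction A) ⋙
    Monad.algebraFunctorOfMonadHom (restrictedIsbellMonadIso A).inv

def restrictedIsbellSpecLiftCompForgetIso :
    restrictedIsbellSpecLift A ⋙ (codensityMonad (indInc A)).forget ≅ restrictedIsbellSpec A :=
  Iso.refl _

end Codensity

theorem restricted_isbell_induces_codensity_and_spec_lifts_to_algebras
    [(indInc A).HasRightKanExtension (indInc A)] :
    Nonempty (Σ' (𝒪 : IndCat A ⥤ ProCat A) (𝒮 : ProCat A ⥤ IndCat A) (adj : 𝒪 ⊣ 𝒮)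
      (_ : 𝒪 ⋙ iotaPro A ≅ iotaInd A ⋙ yoneda.leftKanExtension (ysharp A))
      (_ : 𝒮 ⋙ iotaInd A ≅ iotaPro A ⋙ (ysharp A).rightKanExtension yoneda)
      (_ : adj.toMonad ≅ codensityMonad (indInc A))
      (C : ProCat A ⥤ (codensityMonad (indInc A)).Algebra),
        C ⋙ (codensityMonad (indInc A)).forget ≅ 𝒮) :=
  ⟨⟨restrictedIsbellO A, restrictedIsbellSpec A, restrictedIsbellAdjunction A,
    (iotaIndCompIsbellOIso A).symm ≪≫ isoWhiskerLeft _ (isbellOIsoLan A),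
    isoWhiskerLeft _ (isbellSpecIsoRan A),
    restrictedIsbellMonadIso A, restrictedIsbellSpecLift A, restrictedIsbellSpecLiftCompForgetIso A⟩⟩

end
end
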